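/- arXiv:2110.10464 — 11 statements merged into one kernel-verified Lean document; each statement's English description precedes it below -/
import Mathlib

section
/- Let X, M be n×n symmetric positive definite matrices and U an n×n symmetric matrix. Then the generalized Lyapunov equation X L M + M L X = U has a unique solution L, and this solution is symmetric. -/
/-!
Write `X = Cᴴ C` and `M = Dᴴ D` with `C`, `D` invertible. Then
`tr (Lᴴ (X L M + M L X)) = ‖C L Dᴴ‖²_F + ‖D L Cᴴ‖²_F`, so `L ↦ X L M + M L X` has trivial kernel
and is therefore bijective on the finite-dimensional space of matrices. When `X` and `M` are
symmetric this map commutes with transposition, so for symmetric `U` the transpose of the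
solution is again a solution, hence equal to it.
-/

open Matrix

namespace Matrix

variable {R n : Type*} [Fintype n]

section CommSemiring

variable [CommSemiring R]

def lyapunovMap (X M : Matrix n n R) : Matrix n n R →ₗ[R] Matrix n n R where
  toFun L := X * L * M + M * L * X
  map_add' L L' := by simp only [Matrix.mul_add, Matrix.add_mul]; abel
  map_smul' c L := by simp only [Matrix.mul_smul, Matrix.smul_mul, smul_add, RingHom.id_apply]

theorem lyapunovMap_apply (X M L : Matrix n n R) :
    lyapunovMap X M L = X * L * M + M * L * X := rfl

theorem transpose_lyapunovMap {X M : Matrix n n R} (hX : X.IsSymm) (hM : M.IsSymm)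
    (L : Matrix n n R) : (lyapunovMap X M L)ᵀ = lyapunovMap X M Lᵀ := by
  simp only [lyapunovMap_apply, transpose_add, transpose_mul, hX.eq, hM.eq, Matrix.mul_assoc]
  abel

theorem trace_conjTranspose_mul_lyapunovMap [StarRing R] (C D L : Matrix n n R) :
    trace (Lᴴ * lyapunovMap (Cᴴ * C) (Dᴴ * D) L) =
      trace ((C * L * Dᴴ)ᴴ * (C * L * Dᴴ)) + trace ((D * L * Cᴴ)ᴴ * (D * L * Cᴴ)) := by
  simp only [lyapunovMap_apply, conjTranspose_mul, conjTranspose_conjTranspose, Matrix.mul_add,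
    trace_add, Matrix.mul_assoc]
  congr 1
  · rw [trace_mul_comm D]; simp only [Matrix.mul_assoc]
  · rw [trace_mul_comm C]; simp only [Matrix.mul_assoc]

end CommSemiring

section RCLike

open scoped ComplexOrder

variable {𝕜 : Type*} [RCLike 𝕜]

theorem PosDef.exists_isUnit_eq_conjTranspose_mul_self [DecidableEq n] {X : Matrix n n 𝕜} (hX : X.PosDef) :
    ∃ C : Matrix n n 𝕜, IsUnit C ∧ X = Cᴴ * C := by
  open scoped MatrixOrder in
  exact CStarAlgebra.isStrictlyPositive_iff_eq_star_mul_self.mp hX.isStrictlyPositive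

theorem lyapunovMap_injective {X M : Matrix n n 𝕜} (hX : X.PosDef) (hM : M.PosDef) :
    Function.Injective (lyapunovMap X M) := by
  classical
  obtain ⟨C, hC, rfl⟩ := hX.exists_isUnit_eq_conjTranspose_mul_self
  obtain ⟨D, hD, rfl⟩ := hM.exists_isUnit_eq_conjTranspose_mul_self
  rw [← LinearMap.ker_eq_bot, LinearMap.ker_eq_bot']
  intro L hL
  have htrace := trace_conjTranspose_mul_lyapunovMap C D L
  rw [hL, Matrix.mul_zero, trace_zero, eq_comm, add_eq_zero_iff_of_nonneg
    (posSemidef_conjTranspose_mul_self _).trace_nonneg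
    (posSemidef_conjTranspose_mul_self _).trace_nonneg] at htrace
  have hCLD : C * L * Dᴴ = 0 := trace_conjTranspose_mul_self_eq_zero_iff.mp htrace.1
  rwa [((isUnit_conjTranspose D).mpr hD).mul_left_eq_zero, hC.mul_right_eq_zero] at hCLD

theorem lyapunovMap_bijective {X M : Matrix n n 𝕜} (hX : X.PosDef) (hM : M.PosDef) :
    Function.Bijective (lyapunovMap X M) :=
  have hinj := lyapunovMap_injective hX hM
  ⟨hinj, LinearMap.injective_iff_surjective.mp hinj⟩

end RCLike

end Matrix

theorem stmt1_general {n : Type*} [Fintype n]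
    (X M U : Matrix n n ℝ)
    (hX : X.PosDef) (hM : M.PosDef) (hU : Uᵀ = U) :
    (∃! L : Matrix n n ℝ, X * L * M + M * L * X = U) ∧
    (∀ L : Matrix n n ℝ, X * L * M + M * L * X = U → Lᵀ = L) := by
  have hT := lyapunovMap_bijective hX hM
  refine ⟨hT.existsUnique U, fun L hL => hT.injective ?_⟩
  rw [← transpose_lyapunovMap (isHermitian_iff_isSymm.mp hX.isHermitian)
    (isHermitian_iff_isSymm.mp hM.isHermitian), lyapunovMap_apply, hL, hU]

/-- The generalized Lyapunov equation X L M + M L X = U, with X, M SPD and U symmetric,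
has a unique solution, and any solution is symmetric. -/
theorem stmt1 {n : Type*} [Fintype n] [DecidableEq n]
    (X M U : Matrix n n ℝ)
    (hX : X.PosDef) (hM : M.PosDef) (hU : Uᵀ = U) :
    (∃! L : Matrix n n ℝ, X * L * M + M * L * X = U) ∧
    (∀ L : Matrix n n ℝ, X * L * M + M * L * X = U → Lᵀ = L) :=
  stmt1_general X M U hX hM hU
end

section
/- For n×n symmetric positive definite matrices X and M, and any n×n symmetric matrix H, the solution L of the generalized Lyapunov equation X L M + M L X = H satisfies tr(L H) ≥ 0, with equality iff H = 0. Hence g(U,V) = (1/2) tr(L_{X,M}[U] V) defines a positive definite bilinear form on symmetric matrices. -/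
/-!
Since `H` is symmetric, `tr(L H)` only sees the symmetric part `S` of `L`, and `S` solves the
same equation. For symmetric `S`, `tr(S (X S M + M S X)) = 2 tr(S X S M)`, and writing
`X = Bᵀ B`, `M = Cᵀ C` this is `2 tr(Nᵀ N)` with `N = B S Cᵀ`, a sum of squares. It vanishes
only when `N = 0`, i.e. (`B`, `C` invertible) when `S = 0`, and then `H = X S M + M S X = 0`.
-/

open Matrix
open scoped MatrixOrder

namespace Matrix

variable {n : Type*}

noncomputable def symmPart (L : Matrix n n ℝ) : Matrix n n ℝ := (2⁻¹ : ℝ) • (L + Lᵀ)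

lemma transpose_symmPart (L : Matrix n n ℝ) : (symmPart L)ᵀ = symmPart L := by
  simp [symmPart, add_comm]

lemma symmPart_of_transpose_eq {H : Matrix n n ℝ} (hH : Hᵀ = H) : symmPart H = H := by
  rw [symmPart, hH, ← two_smul ℝ H, smul_smul]
  norm_num

variable [Fintype n]

def lyapunov (X M : Matrix n n ℝ) : Matrix n n ℝ →ₗ[ℝ] Matrix n n ℝ where
  toFun L := X * L * M + M * L * X
  map_add' L L' := by simp only [Matrix.mul_add, Matrix.add_mul]; abel
  map_smul' c L := by simp [smul_add]

lemma lyapunov_apply (X M L : Matrix n n ℝ) : lyapunov X M L = X * L * M + M * L * X := rfl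

lemma lyapunov_transpose {X M : Matrix n n ℝ} (hX : Xᵀ = X) (hM : Mᵀ = M) (L : Matrix n n ℝ) :
    lyapunov X M Lᵀ = (lyapunov X M L)ᵀ := by
  simp only [lyapunov_apply, transpose_add, transpose_mul, hX, hM, Matrix.mul_assoc, add_comm]

lemma lyapunov_symmPart {X M : Matrix n n ℝ} (hX : Xᵀ = X) (hM : Mᵀ = M) (L : Matrix n n ℝ) :
    lyapunov X M (symmPart L) = symmPart (lyapunov X M L) := by
  rw [symmPart, symmPart, map_smul, map_add, lyapunov_transpose hX hM]

lemma trace_symmPart_mul {H : Matrix n n ℝ} (hH : Hᵀ = H) (L : Matrix n n ℝ) :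
    (symmPart L * H).trace = (L * H).trace := by
  have : (Lᵀ * H).trace = (L * H).trace := by
    rw [← trace_transpose, transpose_mul, transpose_transpose, hH, trace_mul_comm]
  rw [symmPart, smul_mul, add_mul, trace_smul, trace_add, this, smul_eq_mul]
  ring

lemma trace_mul_lyapunov_self {X M S : Matrix n n ℝ} (hX : Xᵀ = X) (hM : Mᵀ = M) (hS : Sᵀ = S) :
    (S * lyapunov X M S).trace = 2 * (S * X * S * M).trace := by
  have : (S * (M * S * X)).trace = (S * X * S * M).trace := by
    rw [← trace_transpose]
    simp only [transpose_mul, hX, hM, hS, Matrix.mul_assoc, trace_mul_comm S]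
  rw [lyapunov_apply, Matrix.mul_add, trace_add, this, two_mul]
  simp only [Matrix.mul_assoc]

lemma trace_mul_gram_mul_gram {B C S : Matrix n n ℝ} (hS : Sᵀ = S) :
    (S * (Bᵀ * B) * S * (Cᵀ * C)).trace = ((B * S * Cᵀ)ᵀ * (B * S * Cᵀ)).trace := by
  rw [trace_mul_comm _ (Cᵀ * C)]
  simp only [transpose_mul, transpose_transpose, hS, ← Matrix.mul_assoc]
  rw [trace_mul_comm _ Cᵀ]
  simp only [Matrix.mul_assoc]

lemma PosSemidef.exists_eq_transpose_mul_self {X : Matrix n n ℝ} (hX : X.PosSemidef) :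
    ∃ B : Matrix n n ℝ, X = Bᵀ * B := by
  classical
  obtain ⟨B, rfl⟩ := CStarAlgebra.nonneg_iff_eq_star_mul_self.mp hX.nonneg
  exact ⟨B, by rw [star_eq_conjTranspose, conjTranspose_eq_transpose_of_trivial]⟩

lemma PosDef.exists_isUnit_eq_transpose_mul_self [DecidableEq n] {X : Matrix n n ℝ}
    (hX : X.PosDef) : ∃ B : Matrix n n ℝ, IsUnit B ∧ X = Bᵀ * B := by
  obtain ⟨B, hB, rfl⟩ :=
    CStarAlgebra.isStrictlyPositive_iff_eq_star_mul_self.mp hX.isStrictlyPositive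
  exact ⟨B, hB, by rw [star_eq_conjTranspose, conjTranspose_eq_transpose_of_trivial]⟩

lemma PosSemidef.trace_mul_mul_mul_nonneg {X M S : Matrix n n ℝ} (hX : X.PosSemidef)
    (hM : M.PosSemidef) (hS : Sᵀ = S) : 0 ≤ (S * X * S * M).trace := by
  obtain ⟨B, rfl⟩ := hX.exists_eq_transpose_mul_self
  obtain ⟨C, rfl⟩ := hM.exists_eq_transpose_mul_self
  rw [trace_mul_gram_mul_gram hS, ← conjTranspose_eq_transpose_of_trivial]
  exact (posSemidef_conjTranspose_mul_self _).trace_nonneg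

lemma PosDef.trace_mul_mul_mul_eq_zero_iff [DecidableEq n] {X M S : Matrix n n ℝ}
    (hX : X.PosDef) (hM : M.PosDef) (hS : Sᵀ = S) : (S * X * S * M).trace = 0 ↔ S = 0 := by
  obtain ⟨B, hB, rfl⟩ := hX.exists_isUnit_eq_transpose_mul_self
  obtain ⟨C, hC, rfl⟩ := hM.exists_isUnit_eq_transpose_mul_self
  rw [trace_mul_gram_mul_gram hS, ← conjTranspose_eq_transpose_of_trivial,
    trace_conjTranspose_mul_self_eq_zero_iff,
    (isUnit_transpose C |>.mpr hC).mul_left_eq_zero, hB.mul_right_eq_zero]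

end Matrix

/-- If L solves the generalized Lyapunov equation X L M + M L X = H (X, M SPD, H symmetric)
then tr(L H) ≥ 0 with equality iff H = 0; hence (U,V) ↦ (1/2) tr(L_{X,M}[U] V) is a
positive definite bilinear form on symmetric matrices. -/
theorem stmt2 {n : Type*} [Fintype n] [DecidableEq n]
    (X M H L : Matrix n n ℝ)
    (hX : X.PosDef) (hM : M.PosDef) (hH : Hᵀ = H)
    (hL : X * L * M + M * L * X = H) :
    0 ≤ (L * H).trace ∧ ((L * H).trace = 0 ↔ H = 0) := by
  have hXt : Xᵀ = X := hX.isHermitian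
  have hMt : Mᵀ = M := hM.isHermitian
  set S := symmPart L
  have hSt : Sᵀ = S := transpose_symmPart L
  have hS : lyapunov X M S = H := by
    rw [lyapunov_symmPart hXt hMt, lyapunov_apply, hL, symmPart_of_transpose_eq hH]
  have htrace : (L * H).trace = 2 * (S * X * S * M).trace := by
    rw [← trace_symmPart_mul hH, ← trace_mul_lyapunov_self hXt hMt hSt, hS]
  refine ⟨?_, fun h ↦ ?_, fun h ↦ by simp [h]⟩
  · rw [htrace]
    exact mul_nonneg zero_le_two (hX.posSemidef.trace_mul_mul_mul_nonneg hM.posSemidef hSt)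
  · rw [htrace, mul_eq_zero, or_iff_right two_ne_zero,
      hX.trace_mul_mul_mul_eq_zero_iff hM hSt] at h
    rw [← hS, h, map_zero]
end

section
/- For n×n symmetric positive definite matrices X, Y, M, the minimum over all orthogonal matrices O of the squared Mahalanobis norm tr((X^{1/2} - Y^{1/2}O)^T M^{-1} (X^{1/2} - Y^{1/2}O)) equals tr(M^{-1}X) + tr(M^{-1}Y) - 2 tr((X^{1/2} M^{-1} Y M^{-1} X^{1/2})^{1/2}). -/
/-!
Expanding the square turns the cost of `O` into `tr(M⁻¹X) + tr(M⁻¹Y) - 2 tr(Aᵀ O)` with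
`A = Y^{1/2} M⁻¹ X^{1/2}`. Since `Aᵀ A = S²`, the polar decomposition `Aᵀ = S Uᵀ` with `U = A S⁻¹`
orthogonal reduces the problem to maximising `tr(S Q)` over orthogonal `Q`. For `S ⪰ 0` this is at
most `tr S`, because `2 (tr S - tr (S Q)) = tr ((1 - Q) S (1 - Q)ᵀ) ≥ 0`; equality holds at `Q = 1`,
i.e. at `O = U`.
-/

open Matrix

namespace Matrix

variable {n : Type*} [Fintype n] [DecidableEq n]

theorem PosSemidef.trace_mul_le_trace {S Q : Matrix n n ℝ} (hS : S.PosSemidef)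
    (hQ : Qᵀ * Q = 1) : (S * Q).trace ≤ S.trace := by
  have hSsymm : Sᵀ = S := hS.isHermitian
  have hQT : (S * Qᵀ).trace = (S * Q).trace := by
    rw [← trace_transpose, transpose_mul, transpose_transpose, hSsymm, trace_mul_comm]
  have hdefect : ((1 - Q) * S * (1 - Q)ᵀ).trace = 2 * (S.trace - (S * Q).trace) := by
    have hexpand : S * ((1 - Q)ᵀ * (1 - Q)) = (2 : ℝ) • S - S * Q - S * Qᵀ := by
      simp only [transpose_sub, transpose_one, sub_mul, mul_sub, one_mul, mul_one, hQ]
      module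
    rw [trace_mul_comm, ← Matrix.mul_assoc, trace_mul_comm, ← Matrix.mul_assoc,
      Matrix.mul_assoc, hexpand, trace_sub, trace_sub, trace_smul, hQT, smul_eq_mul]
    ring
  have hnonneg := (hS.mul_mul_conjTranspose_same (1 - Q)).trace_nonneg
  rw [conjTranspose_eq_transpose_of_trivial, hdefect] at hnonneg
  linarith

theorem trace_transpose_sub_mul_mul_sub {P R W O : Matrix n n ℝ} (hW : Wᵀ = W)
    (hO : Oᵀ * O = 1) :
    ((P - R * O)ᵀ * W * (P - R * O)).trace
      = (Pᵀ * W * P).trace + (Rᵀ * W * R).trace - 2 * (Pᵀ * W * R * O).trace := by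
  have hcross : (Oᵀ * Rᵀ * W * P).trace = (Pᵀ * W * R * O).trace := by
    rw [← trace_transpose]
    simp only [transpose_mul, transpose_transpose, hW, Matrix.mul_assoc]
  have hquad : (Oᵀ * Rᵀ * W * R * O).trace = (Rᵀ * W * R).trace := by
    rw [show Oᵀ * Rᵀ * W * R * O = Oᵀ * (Rᵀ * W * R * O) by simp only [Matrix.mul_assoc],
      trace_mul_comm, Matrix.mul_assoc, mul_eq_one_comm.mp hO, Matrix.mul_one]
  simp only [transpose_sub, transpose_mul, sub_mul, mul_sub, trace_sub, ← Matrix.mul_assoc]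
  rw [hcross, hquad]
  ring

theorem isGreatest_trace_transpose_mul_orthogonal {A S : Matrix n n ℝ} (hS : S.PosDef)
    (hAS : Aᵀ * A = S * S) :
    IsGreatest {t | ∃ O : Matrix n n ℝ, Oᵀ * O = 1 ∧ t = (Aᵀ * O).trace} S.trace := by
  have hdet : IsUnit S.det := (isUnit_iff_isUnit_det S).mp hS.isUnit
  have hSS : S * S⁻¹ = 1 := mul_nonsing_inv S hdet
  have hSinv : S⁻¹ᵀ = S⁻¹ := by rw [transpose_nonsing_inv, show Sᵀ = S from hS.isHermitian]
  set U := A * S⁻¹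
  have hAU : Aᵀ = S * Uᵀ := by
    rw [transpose_mul, hSinv, ← Matrix.mul_assoc, hSS, Matrix.one_mul]
  have hU : Uᵀ * U = 1 := by
    rw [transpose_mul, hSinv, Matrix.mul_assoc, ← Matrix.mul_assoc Aᵀ, hAS, Matrix.mul_assoc,
      hSS, Matrix.mul_one, nonsing_inv_mul S hdet]
  refine ⟨⟨U, hU, ?_⟩, ?_⟩
  · rw [hAU, Matrix.mul_assoc, hU, Matrix.mul_one]
  · rintro _ ⟨O, hO, rfl⟩
    have hUO : (Uᵀ * O)ᵀ * (Uᵀ * O) = 1 := by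
      rw [transpose_mul, transpose_transpose, Matrix.mul_assoc, ← Matrix.mul_assoc U,
        mul_eq_one_comm.mp hU, Matrix.one_mul, hO]
    rw [hAU, Matrix.mul_assoc]
    exact hS.posSemidef.trace_mul_le_trace hUO

end Matrix

theorem stmt3_general {n : Type*} [Fintype n] [DecidableEq n]
    (X Y M sqX sqY S : Matrix n n ℝ)
    (hM : M.PosDef)
    (hsqX : sqX.PosDef) (hsqX2 : sqX * sqX = X)
    (hsqY : sqY.PosDef) (hsqY2 : sqY * sqY = Y)
    (hS : S.PosDef) (hS2 : S * S = sqX * M⁻¹ * Y * M⁻¹ * sqX) :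
    IsLeast
      {v : ℝ | ∃ O : Matrix n n ℝ, Oᵀ * O = 1 ∧
        v = ((sqX - sqY * O)ᵀ * M⁻¹ * (sqX - sqY * O)).trace}
      ((M⁻¹ * X).trace + (M⁻¹ * Y).trace - 2 * S.trace) := by
  have hMinv : M⁻¹ᵀ = M⁻¹ := by rw [transpose_nonsing_inv, show Mᵀ = M from hM.isHermitian]
  have hsqXT : sqXᵀ = sqX := hsqX.isHermitian
  have hsqYT : sqYᵀ = sqY := hsqY.isHermitian
  have htrace_sandwich (P : Matrix n n ℝ) : (P * M⁻¹ * P).trace = (M⁻¹ * (P * P)).trace := by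
    rw [trace_mul_cycle, trace_mul_comm]
  set A := sqY * M⁻¹ * sqX
  have hAT : Aᵀ = sqX * M⁻¹ * sqY := by
    simp only [A, transpose_mul, hMinv, hsqXT, hsqYT, Matrix.mul_assoc]
  have hAA : Aᵀ * A = S * S := by
    rw [hAT, hS2, ← hsqY2]
    simp only [A, Matrix.mul_assoc]
  have hcost (O : Matrix n n ℝ) (hO : Oᵀ * O = 1) :
      ((sqX - sqY * O)ᵀ * M⁻¹ * (sqX - sqY * O)).trace
        = (M⁻¹ * X).trace + (M⁻¹ * Y).trace - 2 * (Aᵀ * O).trace := by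
    rw [trace_transpose_sub_mul_mul_sub hMinv hO, hsqXT, hsqYT, htrace_sandwich,
      htrace_sandwich, hsqX2, hsqY2, hAT]
  obtain ⟨⟨O₀, hO₀, hmax⟩, hle⟩ := isGreatest_trace_transpose_mul_orthogonal hS hAA
  refine ⟨⟨O₀, hO₀, by rw [hcost O₀ hO₀, hmax]⟩, ?_⟩
  rintro _ ⟨O, hO, rfl⟩
  rw [hcost O hO]
  linarith [hle ⟨O, hO, rfl⟩]

/-- The minimum of the squared Mahalanobis norm tr((X^{1/2} - Y^{1/2}O)ᵀ M⁻¹ (X^{1/2} - Y^{1/2}O))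
over orthogonal O equals tr(M⁻¹X) + tr(M⁻¹Y) - 2 tr((X^{1/2} M⁻¹ Y M⁻¹ X^{1/2})^{1/2}). -/
theorem stmt3 {n : Type*} [Fintype n] [DecidableEq n]
    (X Y M sqX sqY S : Matrix n n ℝ)
    (hX : X.PosDef) (hY : Y.PosDef) (hM : M.PosDef)
    (hsqX : sqX.PosDef) (hsqX2 : sqX * sqX = X)
    (hsqY : sqY.PosDef) (hsqY2 : sqY * sqY = Y)
    (hS : S.PosDef) (hS2 : S * S = sqX * M⁻¹ * Y * M⁻¹ * sqX) :
    IsLeast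
      {v : ℝ | ∃ O : Matrix n n ℝ, Oᵀ * O = 1 ∧
        v = ((sqX - sqY * O)ᵀ * M⁻¹ * (sqX - sqY * O)).trace}
      ((M⁻¹ * X).trace + (M⁻¹ * Y).trace - 2 * S.trace) :=
  stmt3_general X Y M sqX sqY S hM hsqX hsqX2 hsqY hsqY2 hS hS2
end

section
/- The matrix O = Y^{1/2} M^{-1} X^{1/2} (X^{1/2} M^{-1} Y M^{-1} X^{1/2})^{-1/2}, for X, Y, M symmetric positive definite, is orthogonal, i.e., O^T O = I. -/
open Matrix

/-- O = Y^{1/2} M⁻¹ X^{1/2} (X^{1/2} M⁻¹ Y M⁻¹ X^{1/2})^{-1/2} is orthogonal. -/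
theorem stmt5 {n : Type*} [Fintype n] [DecidableEq n]
    (X Y M sqX sqY S : Matrix n n ℝ)
    (hX : X.PosDef) (hY : Y.PosDef) (hM : M.PosDef)
    (hsqX : sqX.PosDef) (hsqX2 : sqX * sqX = X)
    (hsqY : sqY.PosDef) (hsqY2 : sqY * sqY = Y)
    (hS : S.PosDef) (hS2 : S * S = sqX * M⁻¹ * Y * M⁻¹ * sqX) :
    (sqY * M⁻¹ * sqX * S⁻¹)ᵀ * (sqY * M⁻¹ * sqX * S⁻¹) = 1 := by
  have hSt : Sᵀ = S := by simpa using hS.isHermitian.eq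
  have hMt : Mᵀ = M := by simpa using hM.isHermitian.eq
  have hXt : sqXᵀ = sqX := by simpa using hsqX.isHermitian.eq
  have hYt : sqYᵀ = sqY := by simpa using hsqY.isHermitian.eq
  have hSd : IsUnit S.det := isUnit_iff_ne_zero.mpr hS.det_pos.ne'
  have h1 : S⁻¹ * S = 1 := nonsing_inv_mul _ hSd
  have h2 : S * S⁻¹ = 1 := mul_nonsing_inv _ hSd
  have ht : (sqY * M⁻¹ * sqX * S⁻¹)ᵀ = S⁻¹ * sqX * M⁻¹ * sqY := by
    simp [transpose_mul, transpose_nonsing_inv, hSt, hMt, hXt, hYt, Matrix.mul_assoc]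
  rw [ht]
  calc S⁻¹ * sqX * M⁻¹ * sqY * (sqY * M⁻¹ * sqX * S⁻¹)
      = S⁻¹ * (sqX * M⁻¹ * (sqY * sqY) * M⁻¹ * sqX) * S⁻¹ := by noncomm_ring
    _ = S⁻¹ * (S * S) * S⁻¹ := by rw [hsqY2, ← hS2]
    _ = 1 := by rw [← Matrix.mul_assoc, Matrix.mul_assoc (S⁻¹ * S), h2, Matrix.mul_one, h1]
end

section
/- For n×n symmetric positive definite matrices X, Y, M, the identity Y^{1/2} M^{-1} X^{1/2} (X^{1/2} M^{-1} Y M^{-1} X^{1/2})^{-1/2} = Y^{1/2} (M^{-1} X M^{-1} Y)^{-1/2} M^{-1} X^{1/2} holds, where (M^{-1} X M^{-1} Y)^{-1/2} is defined via the similarity of M^{-1} X M^{-1} Y to an SPD matrix. -/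
open Matrix

/-- Y^{1/2} M⁻¹ X^{1/2} (X^{1/2} M⁻¹ Y M⁻¹ X^{1/2})^{-1/2}
  = Y^{1/2} (M⁻¹ X M⁻¹ Y)^{-1/2} M⁻¹ X^{1/2},
where (M⁻¹ X M⁻¹ Y)^{-1/2} is defined via the similarity
M⁻¹XM⁻¹Y = (M⁻¹X^{1/2}) (X^{1/2}M⁻¹YM⁻¹X^{1/2}) (M⁻¹X^{1/2})⁻¹. -/
theorem stmt6 {n : Type*} [Fintype n] [DecidableEq n]
    (X Y M sqX sqY S R : Matrix n n ℝ)
    (hX : X.PosDef) (hY : Y.PosDef) (hM : M.PosDef)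
    (hsqX : sqX.PosDef) (hsqX2 : sqX * sqX = X)
    (hsqY : sqY.PosDef) (hsqY2 : sqY * sqY = Y)
    (hS : S.PosDef) (hS2 : S * S = sqX * M⁻¹ * Y * M⁻¹ * sqX)
    (hR : R = (M⁻¹ * sqX) * S⁻¹ * (M⁻¹ * sqX)⁻¹) :
    sqY * M⁻¹ * sqX * S⁻¹ = sqY * R * M⁻¹ * sqX := by
  have hMdet : IsUnit M.det := isUnit_iff_ne_zero.mpr hM.det_pos.ne'
  have hxdet : IsUnit sqX.det := isUnit_iff_ne_zero.mpr hsqX.det_pos.ne'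
  have h1 : (M⁻¹ * sqX)⁻¹ = sqX⁻¹ * M := by
    rw [Matrix.mul_inv_rev, Matrix.nonsing_inv_nonsing_inv _ hMdet]
  subst hR
  rw [h1]
  have key : S⁻¹ * (sqX⁻¹ * (M * (M⁻¹ * sqX))) = S⁻¹ := by
    rw [← mul_assoc M, Matrix.mul_nonsing_inv _ hMdet, one_mul,
      Matrix.nonsing_inv_mul _ hxdet, mul_one]
  simp only [mul_assoc]
  rw [key]
end

section
/- Define d_gbw(X,Y)^2 = tr(M^{-1}X) + tr(M^{-1}Y) - 2 tr((X^{1/2} M^{-1} Y M^{-1} X^{1/2})^{1/2}) for SPD matrices X, Y and fixed SPD M. Then d_gbw(X,Y)^2 = d_bw(M^{-1/2} X M^{-1/2}, M^{-1/2} Y M^{-1/2})^2, where d_bw is the Bures-Wasserstein distance d_bw(A,B)^2 = tr(A) + tr(B) - 2 tr((A^{1/2} B A^{1/2})^{1/2}). -/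
/-!
With `N = M^{-1/2}`, `sqA = (N X N)^{1/2}` and `F = N X^{1/2}` we have `F Fᴴ = N X N = sqA²`, so
`U = sqA⁻¹ F` is orthogonal, and `F = sqA U` gives
`S² = X^{1/2} M⁻¹ Y M⁻¹ X^{1/2} = Fᴴ (N Y N) F = Uᴴ T² U`.
Square roots of positive semidefinite matrices are unique, so `S = Uᴴ T U` and `tr S = tr T`;
the linear terms agree by cyclicity of the trace.
-/

open Matrix

namespace Matrix

variable {n : Type*} [Fintype n] [DecidableEq n]

theorem IsHermitian.inv_mul_mem_unitaryGroup {R : Type*} [CommRing R] [StarRing R]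
    {A F : Matrix n n R} (hA : A.IsHermitian) (hdet : IsUnit A.det) (hF : A * A = F * Fᴴ) :
    A⁻¹ * F ∈ unitaryGroup n R := by
  rw [mem_unitaryGroup_iff, star_eq_conjTranspose]
  calc (A⁻¹ * F) * (A⁻¹ * F)ᴴ = A⁻¹ * (F * Fᴴ) * A⁻¹ := by
        rw [conjTranspose_mul, conjTranspose_nonsing_inv, hA.eq]; simp only [Matrix.mul_assoc]
    _ = 1 := by
        rw [← hF, Matrix.mul_assoc, mul_nonsing_inv_cancel_right _ _ hdet, nonsing_inv_mul _ hdet]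

theorem trace_conjTranspose_mul_mul_of_mem_unitaryGroup {R : Type*} [CommRing R] [StarRing R]
    {U : Matrix n n R} (hU : U ∈ unitaryGroup n R) (T : Matrix n n R) :
    (Uᴴ * T * U).trace = T.trace := by
  rw [trace_mul_cycle, ← star_eq_conjTranspose, mem_unitaryGroup_iff.mp hU, Matrix.one_mul]

open scoped MatrixOrder ComplexOrder in
theorem PosSemidef.eq_conjTranspose_mul_mul_of_mul_self_eq {𝕜 : Type*} [RCLike 𝕜]
    {S T U : Matrix n n 𝕜} (hS : S.PosSemidef) (hT : T.PosSemidef) (hU : U ∈ unitaryGroup n 𝕜)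
    (hST : S * S = Uᴴ * (T * T) * U) : S = Uᴴ * T * U := by
  have hUUh : U * Uᴴ = 1 := mem_unitaryGroup_iff.mp hU
  have hconj : (Uᴴ * T * U) * (Uᴴ * T * U) = Uᴴ * (T * T) * U := by
    calc (Uᴴ * T * U) * (Uᴴ * T * U) = Uᴴ * T * (U * Uᴴ) * T * U := by
          simp only [Matrix.mul_assoc]
      _ = Uᴴ * (T * T) * U := by rw [hUUh, Matrix.mul_one]; simp only [Matrix.mul_assoc]
  refine (CFC.mul_self_eq_mul_self_iff S (Uᴴ * T * U) (nonneg_iff_posSemidef.mpr hS)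
    (nonneg_iff_posSemidef.mpr (hT.conjTranspose_mul_mul_same U))).mp ?_
  rw [hST, hconj]

end Matrix

theorem stmt7_general {n : Type*} [Fintype n] [DecidableEq n]
    (X Y M sqX N S sqA T : Matrix n n ℝ)
    (hsqX : sqX.PosDef) (hsqX2 : sqX * sqX = X)
    (hN : N.PosDef) (hN2 : N * N = M⁻¹)
    (hS : S.PosDef) (hS2 : S * S = sqX * M⁻¹ * Y * M⁻¹ * sqX)
    (hsqA : sqA.PosDef) (hsqA2 : sqA * sqA = N * X * N)
    (hT : T.PosDef) (hT2 : T * T = sqA * (N * Y * N) * sqA) :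
    (M⁻¹ * X).trace + (M⁻¹ * Y).trace - 2 * S.trace =
      (N * X * N).trace + (N * Y * N).trace - 2 * T.trace := by
  have hsqAdet : IsUnit sqA.det := hsqA.det_pos.ne'.isUnit
  have hNsqX : (N * sqX)ᴴ = sqX * N := by
    rw [conjTranspose_mul, hN.isHermitian.eq, hsqX.isHermitian.eq]
  set U := sqA⁻¹ * (N * sqX)
  have hU : U ∈ unitaryGroup n ℝ :=
    hsqA.isHermitian.inv_mul_mem_unitaryGroup hsqAdet <| by
      rw [hsqA2, hNsqX, ← hsqX2]; simp only [Matrix.mul_assoc]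
  have hsqAU : sqA * U = N * sqX := mul_nonsing_inv_cancel_left _ _ hsqAdet
  have hSS : S * S = Uᴴ * (T * T) * U := by
    calc S * S = (N * sqX)ᴴ * (N * Y * N) * (N * sqX) := by
          rw [hS2, hNsqX, ← hN2]; simp only [Matrix.mul_assoc]
      _ = Uᴴ * (T * T) * U := by
          rw [← hsqAU, conjTranspose_mul, hsqA.isHermitian.eq, hT2]
          simp only [Matrix.mul_assoc]
  have htrS : S.trace = T.trace := by
    rw [hS.posSemidef.eq_conjTranspose_mul_mul_of_mul_self_eq hT.posSemidef hU hSS,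
      trace_conjTranspose_mul_mul_of_mem_unitaryGroup hU]
  have htr (Z : Matrix n n ℝ) : (M⁻¹ * Z).trace = (N * Z * N).trace := by
    rw [← hN2, Matrix.mul_assoc, trace_mul_comm]
  rw [htr X, htr Y, htrS]

/-- d_gbw(X,Y)² = d_bw(M^{-1/2} X M^{-1/2}, M^{-1/2} Y M^{-1/2})².
Here N = M^{-1/2}, S = (X^{1/2} M⁻¹ Y M⁻¹ X^{1/2})^{1/2},
sqA = (N X N)^{1/2}, and T = (sqA (N Y N) sqA)^{1/2}. -/
theorem stmt7 {n : Type*} [Fintype n] [DecidableEq n]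
    (X Y M sqX N S sqA T : Matrix n n ℝ)
    (hX : X.PosDef) (hY : Y.PosDef) (hM : M.PosDef)
    (hsqX : sqX.PosDef) (hsqX2 : sqX * sqX = X)
    (hN : N.PosDef) (hN2 : N * N = M⁻¹)
    (hS : S.PosDef) (hS2 : S * S = sqX * M⁻¹ * Y * M⁻¹ * sqX)
    (hsqA : sqA.PosDef) (hsqA2 : sqA * sqA = N * X * N)
    (hT : T.PosDef) (hT2 : T * T = sqA * (N * Y * N) * sqA) :
    (M⁻¹ * X).trace + (M⁻¹ * Y).trace - 2 * S.trace =
      (N * X * N).trace + (N * Y * N).trace - 2 * T.trace :=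
  stmt7_general X Y M sqX N S sqA T hsqX hsqX2 hN hN2 hS hS2 hsqA hsqA2 hT hT2
end

section
/- For any n×n symmetric positive definite matrices X, Y, A, M: tr((X^{1/2} M^{-1} Y M^{-1} X^{1/2})^{1/2}) ≤ (1/2)(tr(X A) + tr(M^{-1} Y M^{-1} A^{-1})), with equality for some SPD A; consequently tr((X^{1/2} M^{-1} Y M^{-1} X^{1/2})^{1/2}) = min over SPD A of (1/2) tr(X A + M^{-1} Y M^{-1} A^{-1}). -/
/-!
Substituting `B = X^{1/2} A X^{1/2}` turns the objective into `tr B + tr (S² B⁻¹)` with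
`S² = X^{1/2} M⁻¹ Y M⁻¹ X^{1/2}`, and this substitution is a bijection of the positive definite
cone. The matrix AM–GM inequality `tr B + tr (S B⁻¹ S) - 2 tr S = tr ((B - S) B⁻¹ (B - S)) ≥ 0`
then bounds the objective below by `tr S`, with equality at `B = S`.
-/

open Matrix

namespace Matrix

variable {n : Type*} [Fintype n] [DecidableEq n]

theorem two_mul_trace_le_trace_add_trace_mul_mul_inv {B S : Matrix n n ℝ} (hB : B.PosDef)
    (hS : S.IsHermitian) : 2 * S.trace ≤ B.trace + (S * S * B⁻¹).trace := by
  have hBdet : IsUnit B.det := (isUnit_iff_isUnit_det B).mp hB.isUnit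
  have hsq : (B - S) * B⁻¹ * (B - S) = B - S - S + S * B⁻¹ * S := by
    simp only [sub_mul, mul_sub, mul_nonsing_inv B hBdet, one_mul,
      nonsing_inv_mul_cancel_right B S hBdet]
    abel
  have hpsd : 0 ≤ ((B - S) * B⁻¹ * (B - S)).trace := by
    have := hB.inv.posSemidef.mul_mul_conjTranspose_same (B - S)
    rw [conjTranspose_sub, hB.isHermitian.eq, hS.eq] at this
    exact this.trace_nonneg
  rw [hsq, trace_add, trace_sub, trace_sub, trace_mul_cycle] at hpsd
  linarith

theorem isLeast_half_trace_add_trace_mul_mul_inv {S : Matrix n n ℝ} (hS : S.PosDef) :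
    IsLeast {v | ∃ B : Matrix n n ℝ, B.PosDef ∧ v = 1 / 2 * (B.trace + (S * S * B⁻¹).trace)}
      S.trace := by
  refine ⟨⟨S, hS, ?_⟩, ?_⟩
  · rw [mul_nonsing_inv_cancel_right S S ((isUnit_iff_isUnit_det S).mp hS.isUnit)]
    ring
  · rintro v ⟨B, hB, rfl⟩
    linarith [two_mul_trace_le_trace_add_trace_mul_mul_inv hB hS.isHermitian]

theorem trace_mul_inv_eq_trace_conj {R : Type*} [CommRing R] {P N A : Matrix n n R}
    (hP : IsUnit P) : (N * A⁻¹).trace = (P * N * P * (P * A * P)⁻¹).trace := by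
  have hPdet : IsUnit P.det := (isUnit_iff_isUnit_det P).mp hP
  have hconj : P * N * P * (P * A * P)⁻¹ = P * (N * A⁻¹) * P⁻¹ := by
    rw [mul_inv_rev, mul_inv_rev]
    simp only [mul_assoc, mul_nonsing_inv_cancel_left P _ hPdet]
  rw [hconj, trace_mul_cycle, nonsing_inv_mul P hPdet, one_mul]

theorem exists_posDef_conj_iff {K : Type*} [Field K] [PartialOrder K] [StarRing K]
    {P : Matrix n n K} (hP : P.IsHermitian) (hPunit : IsUnit P) {p : Matrix n n K → Prop} :
    (∃ A : Matrix n n K, A.PosDef ∧ p (P * A * P)) ↔ ∃ B : Matrix n n K, B.PosDef ∧ p B := by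
  have hPdet : IsUnit P.det := (isUnit_iff_isUnit_det P).mp hPunit
  have hconj (A : Matrix n n K) : (P * A * P).PosDef ↔ A.PosDef := by
    rw [← hPunit.posDef_star_right_conjugate_iff (x := A), star_eq_conjTranspose, hP.eq]
  constructor
  · rintro ⟨A, hA, hpA⟩
    exact ⟨P * A * P, (hconj A).2 hA, hpA⟩
  · rintro ⟨B, hB, hpB⟩
    have hcancel : P * (P⁻¹ * B * P⁻¹) * P = B := by
      rw [← mul_assoc, ← mul_assoc, mul_nonsing_inv P hPdet, one_mul,
        nonsing_inv_mul_cancel_right P B hPdet]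
    exact ⟨P⁻¹ * B * P⁻¹, (hconj _).1 (by rwa [hcancel]), by rwa [hcancel]⟩

end Matrix

theorem stmt9_general {n : Type*} [Fintype n] [DecidableEq n]
    (X Y M sqX S : Matrix n n ℝ)
    (hsqX : sqX.PosDef) (hsqX2 : sqX * sqX = X)
    (hS : S.PosDef) (hS2 : S * S = sqX * M⁻¹ * Y * M⁻¹ * sqX) :
    IsLeast
      {v : ℝ | ∃ A : Matrix n n ℝ, A.PosDef ∧
        v = (1 / 2) * ((X * A).trace + (M⁻¹ * Y * M⁻¹ * A⁻¹).trace)}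
      S.trace := by
  have hSS : S * S = sqX * (M⁻¹ * Y * M⁻¹) * sqX := by rw [hS2]; simp only [mul_assoc]
  convert isLeast_half_trace_add_trace_mul_mul_inv hS using 1
  ext v
  simp only [Set.mem_ofPred_eq]
  refine Iff.trans ?_ (exists_posDef_conj_iff hsqX.isHermitian hsqX.isUnit)
  refine exists_congr fun A => and_congr_right fun _ => ?_
  have hXA : (X * A).trace = (sqX * A * sqX).trace := by
    rw [← hsqX2, trace_mul_cycle sqX A sqX]
  rw [hXA, trace_mul_inv_eq_trace_conj hsqX.isUnit, hSS]

/-- tr((X^{1/2} M⁻¹ Y M⁻¹ X^{1/2})^{1/2}) = min over SPD A of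
(1/2) tr(X A + M⁻¹ Y M⁻¹ A⁻¹), the bound holding for all SPD A with equality attained. -/
theorem stmt9 {n : Type*} [Fintype n] [DecidableEq n]
    (X Y M sqX S : Matrix n n ℝ)
    (hX : X.PosDef) (hY : Y.PosDef) (hM : M.PosDef)
    (hsqX : sqX.PosDef) (hsqX2 : sqX * sqX = X)
    (hS : S.PosDef) (hS2 : S * S = sqX * M⁻¹ * Y * M⁻¹ * sqX) :
    IsLeast
      {v : ℝ | ∃ A : Matrix n n ℝ, A.PosDef ∧
        v = (1 / 2) * ((X * A).trace + (M⁻¹ * Y * M⁻¹ * A⁻¹).trace)}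
      S.trace :=
  stmt9_general X Y M sqX S hsqX hsqX2 hS hS2
end

section
/- For n×n symmetric positive definite matrices X, Y, A, M: tr((X^{1/2} M^{-1} Y M^{-1} X^{1/2})^{1/2}) ≤ sqrt(tr(X A) · tr(M^{-1} Y M^{-1} A^{-1})), and the infimum over SPD A of the right-hand side equals the left-hand side. -/
/-!
Write `X = R²` with `R = X^{1/2}` and `C = M⁻¹ Y M⁻¹`, so that `S² = R C R`. For positive
definite `A`, Cauchy–Schwarz for the inner product `⟪U, V⟫ = tr (V A⁻¹ Uᵀ)` applied to `R A` and
`(R⁻¹ S)ᵀ` gives `(tr S)² ≤ tr (R A R) · tr (S R⁻¹ A⁻¹ R⁻¹ S) = tr (X A) · tr (C A⁻¹)`.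
At `A = R⁻¹ S R⁻¹` both traces on the right equal `tr S`, so the bound is attained.
-/

namespace Matrix

variable {n : Type*} [Fintype n] [DecidableEq n]

lemma trace_mul_sq_le_of_posDef {A : Matrix n n ℝ} (hA : A.PosDef) (U V : Matrix n n ℝ) :
    (U * V).trace ^ 2 ≤ (U * A * Uᵀ).trace * (Vᵀ * A⁻¹ * V).trace := by
  let := A⁻¹.toMatrixSeminormedAddCommGroup hA.inv.posSemidef
  let := A⁻¹.toMatrixInnerProductSpace hA.inv.posSemidef
  have hCS := real_inner_mul_inner_self_le (U * A) Vᵀ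
  -- `⟪x, y⟫ = tr (y A⁻¹ xᴴ)` in this inner product structure
  change (Vᵀ * A⁻¹ * (U * A)ᴴ).trace * (Vᵀ * A⁻¹ * (U * A)ᴴ).trace
    ≤ (U * A * A⁻¹ * (U * A)ᴴ).trace * (Vᵀ * A⁻¹ * Vᵀᴴ).trace at hCS
  have hAT : Aᵀ = A := (isHermitian_iff_isSymm.mp hA.isHermitian).eq
  have := hA.isUnit.invertible
  simp only [conjTranspose_eq_transpose_of_trivial, transpose_mul, hAT, transpose_transpose,
    mul_inv_cancel_right_of_invertible] at hCS
  rwa [mul_assoc, inv_mul_cancel_left_of_invertible, ← transpose_mul, trace_transpose, ← sq,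
    ← mul_assoc U] at hCS

variable {R S C A : Matrix n n ℝ}

lemma trace_le_sqrt_trace_mul_trace_inv (hR : R.PosDef) (hS : S.IsHermitian)
    (hSR : S * S = R * C * R) (hA : A.PosDef) :
    S.trace ≤ √((R * R * A).trace * (C * A⁻¹).trace) := by
  have := hR.isUnit.invertible
  have hRT : Rᵀ = R := (isHermitian_iff_isSymm.mp hR.isHermitian).eq
  have hST : Sᵀ = S := (isHermitian_iff_isSymm.mp hS).eq
  have hCS := trace_mul_sq_le_of_posDef hA R (R⁻¹ * S)
  have hX : (R * A * Rᵀ).trace = (R * R * A).trace := by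
    rw [hRT, trace_mul_cycle]
  have hC : ((R⁻¹ * S)ᵀ * A⁻¹ * (R⁻¹ * S)).trace = (C * A⁻¹).trace := by
    calc ((R⁻¹ * S)ᵀ * A⁻¹ * (R⁻¹ * S)).trace = (R⁻¹ * (S * S) * R⁻¹ * A⁻¹).trace := by
          rw [transpose_mul, hST, transpose_nonsing_inv, hRT, trace_mul_comm]
          simp only [mul_assoc]
      _ = (C * A⁻¹).trace := by
          simp only [hSR, mul_assoc, inv_mul_cancel_left_of_invertible,
            mul_inv_cancel_left_of_invertible]
  rw [mul_inv_cancel_left_of_invertible, hX, hC] at hCS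
  exact Real.le_sqrt_of_sq_le hCS

lemma posDef_inv_mul_mul_inv (hR : R.PosDef) (hS : S.PosDef) : (R⁻¹ * S * R⁻¹).PosDef := by
  simpa only [hR.inv.isHermitian.eq] using
    hS.conjTranspose_mul_mul_same (mulVec_injective_iff_isUnit.2 hR.inv.isUnit)

lemma trace_mul_mul_inv_mul_mul_inv (hR : R.PosDef) :
    (R * R * (R⁻¹ * S * R⁻¹)).trace = S.trace := by
  have := hR.isUnit.invertible
  rw [trace_mul_cycle, mul_assoc, mul_assoc, inv_mul_cancel_left_of_invertible,
    trace_mul_cycle, mul_inv_of_invertible, one_mul]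

lemma trace_mul_inv_inv_mul_mul_inv (hR : R.PosDef) (hS : S.PosDef) (hSR : S * S = R * C * R) :
    (C * (R⁻¹ * S * R⁻¹)⁻¹).trace = S.trace := by
  have := hR.isUnit.invertible
  have := hS.isUnit.invertible
  rw [mul_inv_rev, mul_inv_rev, inv_inv_of_invertible, ← mul_assoc, ← mul_assoc,
    trace_mul_cycle, ← mul_assoc, ← hSR, mul_inv_cancel_right_of_invertible]

lemma isLeast_sqrt_trace_mul_trace_inv (hR : R.PosDef) (hS : S.PosDef) (hSR : S * S = R * C * R) :
    IsLeast {v : ℝ | ∃ A : Matrix n n ℝ, A.PosDef ∧ v = √((R * R * A).trace * (C * A⁻¹).trace)}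
      S.trace := by
  refine ⟨⟨R⁻¹ * S * R⁻¹, posDef_inv_mul_mul_inv hR hS, ?_⟩, ?_⟩
  · rw [trace_mul_mul_inv_mul_mul_inv hR, trace_mul_inv_inv_mul_mul_inv hR hS hSR,
      Real.sqrt_mul_self hS.posSemidef.trace_nonneg]
  · rintro _ ⟨A, hA, rfl⟩
    exact trace_le_sqrt_trace_mul_trace_inv hR hS.isHermitian hSR hA

end Matrix

theorem stmt10_general {n : Type*} [Fintype n] [DecidableEq n]
    (X Y M sqX S : Matrix n n ℝ)
    (hsqX : sqX.PosDef) (hsqX2 : sqX * sqX = X)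
    (hS : S.PosDef) (hS2 : S * S = sqX * M⁻¹ * Y * M⁻¹ * sqX) :
    (∀ A : Matrix n n ℝ, A.PosDef →
      S.trace ≤ Real.sqrt ((X * A).trace * (M⁻¹ * Y * M⁻¹ * A⁻¹).trace)) ∧
    IsGLB
      {v : ℝ | ∃ A : Matrix n n ℝ, A.PosDef ∧
        v = Real.sqrt ((X * A).trace * (M⁻¹ * Y * M⁻¹ * A⁻¹).trace)}
      S.trace := by
  subst hsqX2
  have hleast := Matrix.isLeast_sqrt_trace_mul_trace_inv (C := M⁻¹ * Y * M⁻¹) hsqX hS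
    (by rw [hS2]; simp only [mul_assoc])
  exact ⟨fun A hA => hleast.2 ⟨A, hA, rfl⟩, hleast.isGLB⟩

/-- tr((X^{1/2} M⁻¹ Y M⁻¹ X^{1/2})^{1/2}) ≤ sqrt(tr(X A) tr(M⁻¹ Y M⁻¹ A⁻¹)) for all SPD A,
and the infimum over SPD A of the right-hand side equals the left-hand side. -/
theorem stmt10 {n : Type*} [Fintype n] [DecidableEq n]
    (X Y M sqX S : Matrix n n ℝ)
    (hX : X.PosDef) (hY : Y.PosDef) (hM : M.PosDef)
    (hsqX : sqX.PosDef) (hsqX2 : sqX * sqX = X)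
    (hS : S.PosDef) (hS2 : S * S = sqX * M⁻¹ * Y * M⁻¹ * sqX) :
    (∀ A : Matrix n n ℝ, A.PosDef →
      S.trace ≤ Real.sqrt ((X * A).trace * (M⁻¹ * Y * M⁻¹ * A⁻¹).trace)) ∧
    IsGLB
      {v : ℝ | ∃ A : Matrix n n ℝ, A.PosDef ∧
        v = Real.sqrt ((X * A).trace * (M⁻¹ * Y * M⁻¹ * A⁻¹).trace)}
      S.trace :=
  stmt10_general X Y M sqX S hsqX hsqX2 hS hS2
end

section
/- Let X, M be SPD matrices, U a symmetric matrix, and let L = L_{X,M}[U] be the solution of X L M + M L X = U. Then the generalized Bures-Wasserstein exponential X + U + M L X L M equals (I + M L) X (I + L M), and hence is symmetric positive semidefinite; it is positive definite whenever I + M L is invertible (in particular when M + M L M is SPD). -/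
open Matrix

theorem one_add_mul_mul_one_add_mul {R : Type*} [Ring R] (x m l : R) :
    (1 + m * l) * x * (1 + l * m) = x + (x * l * m + m * l * x) + m * l * x * l * m := by
  noncomm_ring

theorem IsSelfAdjoint.star_one_add_mul {R : Type*} [Semiring R] [StarRing R] {m l : R}
    (hm : IsSelfAdjoint m) (hl : IsSelfAdjoint l) : star (1 + m * l) = 1 + l * m := by
  rw [star_add, star_one, star_mul, hm.star_eq, hl.star_eq]

theorem isUnit_one_add_mul_of_isUnit_add_mul_mul {R : Type*} [Ring R] [IsDedekindFiniteMonoid R]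
    {m l : R} (h : IsUnit (m + m * l * m)) : IsUnit (1 + m * l) :=
  isUnit_of_mul_isUnit_left (y := m) (by rwa [add_mul, one_mul])

theorem stmt13_general {n : Type*} [Fintype n] [DecidableEq n]
    (X M U L : Matrix n n ℝ)
    (hX : X.PosDef) (hM : M.PosDef)
    (hLsym : Lᵀ = L) (hL : X * L * M + M * L * X = U) :
    X + U + M * L * X * L * M = (1 + M * L) * X * (1 + L * M) ∧
    (X + U + M * L * X * L * M).PosSemidef ∧
    (IsUnit (1 + M * L) → (X + U + M * L * X * L * M).PosDef) ∧
    ((M + M * L * M).PosDef → (X + U + M * L * X * L * M).PosDef) := by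
  have hconj : (1 + M * L) * X * (1 + L * M) = (1 + M * L) * X * star (1 + M * L) := by
    rw [hM.isHermitian.isSelfAdjoint.star_one_add_mul
      (isHermitian_iff_isSymm.mpr hLsym).isSelfAdjoint]
  have heq : X + U + M * L * X * L * M = (1 + M * L) * X * (1 + L * M) := by
    rw [one_add_mul_mul_one_add_mul, hL]
  have hdef : IsUnit (1 + M * L) → (X + U + M * L * X * L * M).PosDef := fun hunit => by
    rwa [heq, hconj, hunit.posDef_star_right_conjugate_iff]
  refine ⟨heq, ?_, hdef, fun hP => hdef (isUnit_one_add_mul_of_isUnit_add_mul_mul hP.isUnit)⟩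
  rw [heq, hconj]
  exact hX.posSemidef.mul_mul_conjTranspose_same _

/-- With L = L_{X,M}[U] the symmetric solution of X L M + M L X = U, the GBW exponential
X + U + M L X L M equals (I + M L) X (I + L M), hence is positive semidefinite; it is
positive definite when I + M L is invertible, in particular when M + M L M is SPD. -/
theorem stmt13 {n : Type*} [Fintype n] [DecidableEq n]
    (X M U L : Matrix n n ℝ)
    (hX : X.PosDef) (hM : M.PosDef) (hU : Uᵀ = U)
    (hLsym : Lᵀ = L) (hL : X * L * M + M * L * X = U) :
    X + U + M * L * X * L * M = (1 + M * L) * X * (1 + L * M) ∧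
    (X + U + M * L * X * L * M).PosSemidef ∧
    (IsUnit (1 + M * L) → (X + U + M * L * X * L * M).PosDef) ∧
    ((M + M * L * M).PosDef → (X + U + M * L * X * L * M).PosDef) :=
  stmt13_general X M U L hX hM hLsym hL
end

section
/- Let X, Y, M be n×n SPD matrices. Define U = M (M^{-1} X M^{-1} Y)^{1/2} + (Y M^{-1} X M^{-1})^{1/2} M - 2X (the GBW logarithm), and let L = L_{X,M}[U] solve X L M + M L X = U. Then the GBW exponential applied to U recovers Y: X + U + M L X L M = Y. -/
/-!
Put `S = M X⁻¹ M`. Both `S R1 S⁻¹` and `R2` are square roots of `Y S⁻¹` similar to positive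
definite matrices, and such a square root is unique (diagonalize both and compare entrywise), so
`R2 S = S R1`. Hence `L₀ = X⁻¹ (M R1 - X) M⁻¹` satisfies `X L₀ M = M R1 - X` and
`M L₀ X = R2 M - X`, so it solves the Lyapunov equation. That equation has at most one solution:
for `X = CᴴC`, `M = BᴴB`, the trace of `Dᴴ (X D M + M D X)` is `‖C D Bᴴ‖² + ‖B D Cᴴ‖²`.
Finally `M L X L M = (R2 M - X) X⁻¹ (M R1 - X)`, and `R2 S R1 = S R1 R1 = Y`.
-/

open Matrix

namespace Matrix

theorem mul_diagonal_eq_diagonal_mul_of_mul_self {R m n : Type*} [CommRing R] [LinearOrder R]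
    [IsStrictOrderedRing R] [Fintype m] [Fintype n] [DecidableEq m] [DecidableEq n]
    {C : Matrix m n R} {d : n → R} {e : m → R}
    (hd : ∀ j, 0 ≤ d j) (he : ∀ i, 0 ≤ e i)
    (h : C * diagonal (fun j => d j * d j) = diagonal (fun i => e i * e i) * C) :
    C * diagonal d = diagonal e * C := by
  ext i j
  have hij := congr_fun₂ h i j
  simp only [mul_diagonal, diagonal_mul] at hij ⊢
  rcases eq_or_ne (C i j) 0 with hC | hC
  · simp [hC]
  · rw [mul_comm (e i * e i)] at hij
    rw [(mul_self_inj (hd j) (he i)).mp (mul_left_cancel₀ hC hij), mul_comm]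

section Similarity

variable {n : Type*} [Fintype n] [DecidableEq n]

def IsSimilarToPosDef (A : Matrix n n ℝ) : Prop :=
  ∃ P : Matrix n n ℝ, IsUnit P.det ∧ (P * A * P⁻¹).PosDef

theorem IsSimilarToPosDef.units_conj {A : Matrix n n ℝ} (hA : A.IsSimilarToPosDef)
    (S : (Matrix n n ℝ)ˣ) :
    ((S : Matrix n n ℝ) * A * (↑(S⁻¹) : Matrix n n ℝ)).IsSimilarToPosDef := by
  obtain ⟨P, hP, hPA⟩ := hA
  refine ⟨P * (↑(S⁻¹) : Matrix n n ℝ), ?_, ?_⟩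
  · rw [det_mul]
    exact hP.mul ((isUnit_iff_isUnit_det _).mp S⁻¹.isUnit)
  · rw [Matrix.mul_inv_rev, ← coe_units_inv, inv_inv]
    simpa only [Matrix.mul_assoc, Units.inv_mul_cancel_left] using hPA

theorem IsSimilarToPosDef.exists_mul_eq_mul_diagonal {A : Matrix n n ℝ}
    (hA : A.IsSimilarToPosDef) :
    ∃ (V : (Matrix n n ℝ)ˣ) (d : n → ℝ), (∀ i, 0 < d i) ∧ A * V = V * diagonal d := by
  obtain ⟨P, hP, hPA⟩ := hA
  lift P to (Matrix n n ℝ)ˣ using (isUnit_iff_isUnit_det _).mpr hP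
  rw [← coe_units_inv] at hPA
  set U := hPA.isHermitian.eigenvectorUnitary
  have hU := hPA.isHermitian.conjStarAlgAut_star_eigenvectorUnitary
  rw [Unitary.conjStarAlgAut_star_apply] at hU
  refine ⟨P⁻¹ * Unitary.toUnits U, hPA.isHermitian.eigenvalues, hPA.eigenvalues_pos, ?_⟩
  have hUU : (U : Matrix n n ℝ) * star (U : Matrix n n ℝ) = 1 :=
    Unitary.mul_star_self_of_mem U.2
  simp only [Units.val_mul, Unitary.val_toUnits_apply]
  calc A * ((↑(P⁻¹) : Matrix n n ℝ) * ↑U)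
        = ↑(P⁻¹) * (↑U * (star ↑U * (↑P * A * ↑(P⁻¹)) * ↑U)) := by
        simp only [← Matrix.mul_assoc, hUU, Matrix.one_mul]
        simp only [Matrix.mul_assoc, Units.inv_mul_cancel_left]
    _ = _ := by rw [hU]; simp [Matrix.mul_assoc]

theorem IsSimilarToPosDef.eq_of_mul_self_eq {A B : Matrix n n ℝ} (hA : A.IsSimilarToPosDef)
    (hB : B.IsSimilarToPosDef) (h : A * A = B * B) : A = B := by
  obtain ⟨V, d, hd, hAV⟩ := hA.exists_mul_eq_mul_diagonal
  obtain ⟨W, e, he, hBW⟩ := hB.exists_mul_eq_mul_diagonal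
  set W' : Matrix n n ℝ := ((W⁻¹ : (Matrix n n ℝ)ˣ) : Matrix n n ℝ)
  have hWB : W' * B = diagonal e * W' := by
    simpa [W', Matrix.mul_assoc] using congr(W' * $hBW * W')
  set C : Matrix n n ℝ := W' * V
  have hC2 : C * diagonal (fun j => d j * d j) = diagonal (fun i => e i * e i) * C := by
    calc C * diagonal (fun j => d j * d j) = W' * (A * A) * V := by
          simp only [C, ← diagonal_mul_diagonal, Matrix.mul_assoc, hAV]
          simp only [← Matrix.mul_assoc, hAV]
      _ = diagonal (fun i => e i * e i) * C := by
          rw [h, ← Matrix.mul_assoc, hWB, Matrix.mul_assoc _ W' B, hWB, ← diagonal_mul_diagonal]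
          simp only [C, Matrix.mul_assoc]
  have hC := mul_diagonal_eq_diagonal_mul_of_mul_self (fun j => (hd j).le) (fun i => (he i).le) hC2
  refine (Units.mul_left_inj V).mp ?_
  calc A * V = V * diagonal d := hAV
    _ = W * (C * diagonal d) := by simp [C, W', ← Matrix.mul_assoc]
    _ = B * V := by
        rw [hC, ← Matrix.mul_assoc, ← Matrix.mul_assoc, ← hBW]
        simp [W', Matrix.mul_assoc]

theorem IsSimilarToPosDef.semiconjBy_of_mul_self {S Y R₁ R₂ : Matrix n n ℝ} (hS : IsUnit S)
    (h₁ : R₁.IsSimilarToPosDef) (h₂ : R₂.IsSimilarToPosDef)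
    (hR₁ : S * (R₁ * R₁) = Y) (hR₂ : R₂ * R₂ * S = Y) : SemiconjBy S R₁ R₂ := by
  lift S to (Matrix n n ℝ)ˣ using hS
  have hconj : (S : Matrix n n ℝ) * R₁ * (↑(S⁻¹) : Matrix n n ℝ) = R₂ := by
    refine (h₁.units_conj S).eq_of_mul_self_eq h₂ ?_
    rw [← Units.mul_left_inj S, hR₂]
    simp [← hR₁, Matrix.mul_assoc]
  rw [SemiconjBy, ← hconj]
  simp [Matrix.mul_assoc]

end Similarity

section Lyapunov

open scoped ComplexOrder MatrixOrder

variable {𝕜 n : Type*} [RCLike 𝕜] [Fintype n] [DecidableEq n]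

theorem PosDef.eq_zero_of_mul_mul_add_mul_mul_eq_zero {X M D : Matrix n n 𝕜}
    (hX : X.PosDef) (hM : M.PosDef) (h : X * D * M + M * D * X = 0) : D = 0 := by
  obtain ⟨C, hC, rfl⟩ := CStarAlgebra.isStrictlyPositive_iff_eq_star_mul_self.mp
    hX.isStrictlyPositive
  obtain ⟨B, hB, rfl⟩ := CStarAlgebra.isStrictlyPositive_iff_eq_star_mul_self.mp
    hM.isStrictlyPositive
  simp only [star_eq_conjTranspose] at h
  have htrace : ((C * D * Bᴴ)ᴴ * (C * D * Bᴴ)).trace + ((B * D * Cᴴ)ᴴ * (B * D * Cᴴ)).trace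
      = (Dᴴ * (Cᴴ * C * D * (Bᴴ * B) + Bᴴ * B * D * (Cᴴ * C))).trace := by
    simp only [conjTranspose_mul, conjTranspose_conjTranspose, Matrix.mul_add, trace_add]
    congr 1 <;> simp only [Matrix.mul_assoc] <;> rw [trace_mul_comm] <;>
      simp only [Matrix.mul_assoc]
  rw [h, Matrix.mul_zero, trace_zero] at htrace
  have hCDB : ((C * D * Bᴴ)ᴴ * (C * D * Bᴴ)).trace = 0 :=
    (add_eq_zero_iff_of_nonneg (posSemidef_conjTranspose_mul_self _).trace_nonneg
      (posSemidef_conjTranspose_mul_self _).trace_nonneg).mp htrace |>.1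
  rw [trace_conjTranspose_mul_self_eq_zero_iff, IsUnit.mul_left_eq_zero (b := Bᴴ) hB.star,
    hC.mul_right_eq_zero] at hCDB
  exact hCDB

theorem PosDef.lyapunov_injective {X M : Matrix n n 𝕜} (hX : X.PosDef) (hM : M.PosDef) :
    Function.Injective fun D => X * D * M + M * D * X := by
  intro D₁ D₂ h
  rw [← sub_eq_zero]
  refine hX.eq_zero_of_mul_mul_add_mul_mul_eq_zero hM ?_
  simpa only [Matrix.mul_sub, Matrix.sub_mul, sub_add_sub_comm, sub_eq_zero] using h

end Lyapunov

end Matrix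

theorem stmt14_general {n : Type*} [Fintype n] [DecidableEq n]
    (X Y M R1 R2 L : Matrix n n ℝ)
    (hX : X.PosDef) (hM : M.PosDef)
    (hR1 : R1 * R1 = M⁻¹ * X * M⁻¹ * Y)
    (hR1sim : ∃ P : Matrix n n ℝ, IsUnit P.det ∧ (P * R1 * P⁻¹).PosDef)
    (hR2 : R2 * R2 = Y * M⁻¹ * X * M⁻¹)
    (hR2sim : ∃ P : Matrix n n ℝ, IsUnit P.det ∧ (P * R2 * P⁻¹).PosDef)
    (hL : X * L * M + M * L * X = M * R1 + R2 * M - (2 : ℝ) • X) :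
    X + (M * R1 + R2 * M - (2 : ℝ) • X) + M * L * X * L * M = Y := by
  have := hX.isUnit.invertible
  have := hM.isUnit.invertible
  set S := M * X⁻¹ * M
  have hS : IsUnit S := (hM.isUnit.mul hX.inv.isUnit).mul hM.isUnit
  have hSR : SemiconjBy S R1 R2 := by
    refine IsSimilarToPosDef.semiconjBy_of_mul_self (Y := Y) hS hR1sim hR2sim ?_ ?_
    · rw [hR1]; simp [S, Matrix.mul_assoc]
    · rw [hR2]; simp [S, Matrix.mul_assoc]
  set L₀ := X⁻¹ * (M * R1 - X) * M⁻¹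
  have hXLM : X * L₀ * M = M * R1 - X := by simp [L₀, Matrix.mul_assoc]
  have hMLX : M * L₀ * X = R2 * M - X := calc
    M * L₀ * X = S * R1 * (M⁻¹ * X) - X := by
      simp [L₀, S, Matrix.mul_sub, Matrix.sub_mul, Matrix.mul_assoc]
    _ = R2 * M - X := by rw [hSR.eq]; simp [S, Matrix.mul_assoc]
  have hL₀ : X * L₀ * M + M * L₀ * X = M * R1 + R2 * M - (2 : ℝ) • X := by
    rw [hXLM, hMLX]; module
  have hLL₀ : L = L₀ := hX.lyapunov_injective hM (hL.trans hL₀.symm)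
  have hY : R2 * (M * (X⁻¹ * (M * R1))) = Y := by
    simpa [S, Matrix.mul_assoc, hR1] using congr($hSR.eq.symm * R1)
  calc X + (M * R1 + R2 * M - (2 : ℝ) • X) + M * L * X * L * M
      = X + (M * R1 + R2 * M - (2 : ℝ) • X) + (R2 * M - X) * X⁻¹ * (M * R1 - X) := by
        rw [← hXLM, ← hMLX, hLL₀]; simp [Matrix.mul_assoc]
    _ = Y := by
      simp only [Matrix.sub_mul, Matrix.mul_sub, Matrix.mul_assoc, inv_mul_of_invertible,
        mul_inv_cancel_left_of_invertible, Matrix.mul_one, hY]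
      module

/-- The GBW exponential applied to the GBW logarithm
U = M (M⁻¹XM⁻¹Y)^{1/2} + (YM⁻¹XM⁻¹)^{1/2} M - 2X recovers Y:
X + U + M L X L M = Y, where L solves X L M + M L X = U. R1, R2 are the principal
square roots of M⁻¹XM⁻¹Y and YM⁻¹XM⁻¹ (similar to SPD matrices). -/
theorem stmt14 {n : Type*} [Fintype n] [DecidableEq n]
    (X Y M R1 R2 L : Matrix n n ℝ)
    (hX : X.PosDef) (hY : Y.PosDef) (hM : M.PosDef)
    (hR1 : R1 * R1 = M⁻¹ * X * M⁻¹ * Y)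
    (hR1sim : ∃ P : Matrix n n ℝ, IsUnit P.det ∧ (P * R1 * P⁻¹).PosDef)
    (hR2 : R2 * R2 = Y * M⁻¹ * X * M⁻¹)
    (hR2sim : ∃ P : Matrix n n ℝ, IsUnit P.det ∧ (P * R2 * P⁻¹).PosDef)
    (hLsym : Lᵀ = L)
    (hL : X * L * M + M * L * X = M * R1 + R2 * M - (2 : ℝ) • X) :
    X + (M * R1 + R2 * M - (2 : ℝ) • X) + M * L * X * L * M = Y :=
  stmt14_general X Y M R1 R2 L hX hM hR1 hR1sim hR2 hR2sim hL
end

section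
/- Let X_1,...,X_N be SPD matrices, w_1,...,w_N nonnegative weights summing to 1, and M, A SPD. Define K(A) = M A^{-1/2} (Σ_l w_l (A^{1/2} M^{-1} X_l M^{-1} A^{1/2})^{1/2})^2 A^{-1/2} M. Then K(A) ⪯ Σ_l w_l X_l in the Loewner order. -/
open Matrix

/-- The fixed-point map K(A) = M A^{-1/2} (Σ_l w_l (A^{1/2} M⁻¹ X_l M⁻¹ A^{1/2})^{1/2})² A^{-1/2} M
satisfies K(A) ⪯ Σ_l w_l X_l in the Loewner order. `sqA` is the SPD square root of A and
`S l` the SPD square root of A^{1/2} M⁻¹ X_l M⁻¹ A^{1/2}. -/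
theorem stmt18 {n : Type*} [Fintype n] [DecidableEq n] (N : ℕ)
    (X : Fin N → Matrix n n ℝ) (w : Fin N → ℝ)
    (M A sqA : Matrix n n ℝ) (S : Fin N → Matrix n n ℝ)
    (hX : ∀ l, (X l).PosDef) (hw : ∀ l, 0 ≤ w l) (hwsum : ∑ l, w l = 1)
    (hM : M.PosDef) (hA : A.PosDef)
    (hsqA : sqA.PosDef) (hsqA2 : sqA * sqA = A)
    (hS : ∀ l, (S l).PosDef)
    (hS2 : ∀ l, S l * S l = sqA * M⁻¹ * X l * M⁻¹ * sqA) :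
    ((∑ l, w l • X l) -
      M * sqA⁻¹ * ((∑ l, w l • S l) * (∑ l, w l • S l)) * sqA⁻¹ * M).PosSemidef := by
  classical
  have hMdet : IsUnit M.det := isUnit_iff_ne_zero.mpr hM.det_pos.ne'
  have hsdet : IsUnit sqA.det := isUnit_iff_ne_zero.mpr hsqA.det_pos.ne'
  set T : Matrix n n ℝ := ∑ l, w l • S l with hT
  have hTH : Tᴴ = T := by
    rw [hT, conjTranspose_sum]
    exact Finset.sum_congr rfl fun l _ => by
      rw [conjTranspose_smul, (hS l).1.eq]; simp
  have hBH : (M * sqA⁻¹)ᴴ = sqA⁻¹ * M := by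
    rw [conjTranspose_mul, conjTranspose_nonsing_inv, hsqA.1.eq, hM.1.eq]
  -- key identity: conjugating S l * S l by M sqA⁻¹ gives X l
  have key : ∀ l, M * sqA⁻¹ * (S l * S l) * (sqA⁻¹ * M) = X l := by
    intro l
    rw [hS2 l]
    calc M * sqA⁻¹ * (sqA * M⁻¹ * X l * M⁻¹ * sqA) * (sqA⁻¹ * M)
        = M * (sqA⁻¹ * (sqA * (M⁻¹ * (X l * (M⁻¹ * (sqA * (sqA⁻¹ * M))))))) := by
          simp only [Matrix.mul_assoc]
      _ = X l := by
          rw [Matrix.mul_nonsing_inv_cancel_left sqA _ hsdet,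
            Matrix.nonsing_inv_mul_cancel_left sqA _ hsdet,
            Matrix.nonsing_inv_mul M hMdet, Matrix.mul_one,
            Matrix.mul_nonsing_inv_cancel_left M _ hMdet]
  -- the PSD core: ∑ w l • (S l - T)ᴴ (S l - T)
  have hD : (∑ l, w l • ((S l - T)ᴴ * (S l - T))).PosSemidef := by
    refine Finset.sum_induction _ _ (fun a b ha hb => ha.add hb) Matrix.PosSemidef.zero ?_
    intro l _
    have : (Real.sqrt (w l) • (S l - T))ᴴ * (Real.sqrt (w l) • (S l - T)) =
        w l • ((S l - T)ᴴ * (S l - T)) := by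
      rw [conjTranspose_smul, star_trivial, Matrix.smul_mul, Matrix.mul_smul, smul_smul,
        Real.mul_self_sqrt (hw l)]
    rw [← this]
    exact posSemidef_conjTranspose_mul_self _
  -- algebraic identity: ∑ w l • (S l - T)ᴴ (S l - T) = ∑ w l • (S l * S l) - T * T
  have hsum : (∑ l, w l • ((S l - T)ᴴ * (S l - T))) = (∑ l, w l • (S l * S l)) - T * T := by
    have expand : ∀ l, w l • ((S l - T)ᴴ * (S l - T)) =
        w l • (S l * S l) - (w l • S l) * T - T * (w l • S l) + w l • (T * T) := by
      intro l
      rw [conjTranspose_sub, (hS l).1.eq, hTH]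
      simp only [Matrix.sub_mul, Matrix.mul_sub, smul_sub, Matrix.smul_mul, Matrix.mul_smul]
      abel
    rw [Finset.sum_congr rfl fun l _ => expand l]
    rw [Finset.sum_add_distrib, Finset.sum_sub_distrib, Finset.sum_sub_distrib]
    rw [← Finset.sum_mul, ← Finset.mul_sum, ← hT, ← Finset.sum_smul, hwsum, one_smul]
    abel
  -- conjugate and conclude
  have final : (∑ l, w l • X l) -
      M * sqA⁻¹ * (T * T) * sqA⁻¹ * M =
      (M * sqA⁻¹) * (∑ l, w l • ((S l - T)ᴴ * (S l - T))) * (M * sqA⁻¹)ᴴ := by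
    rw [hsum, hBH, Matrix.mul_sub, Matrix.sub_mul]
    congr 1
    · rw [Matrix.mul_sum, Matrix.sum_mul]
      refine Finset.sum_congr rfl fun l _ => ?_
      rw [Matrix.mul_smul, Matrix.smul_mul, key l]
    · simp only [Matrix.mul_assoc]
  rw [final]
  exact hD.mul_mul_conjTranspose_same _
end
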